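/- arXiv:1902.04945 — 2 statements merged into one kernel-verified Lean document; each statement's English description precedes it below -/
import Mathlib

section
/- Let d ≥ 1 be an integer, j ∈ ℕ₀ and 0 < p_i ≤ u_i < ∞ for i = 1, 2. If p1 ≥ p2 and u2 < u1, then the operator quasi-norm of the identity map id_j : m^{2^{jd}}_{u1,p1} → m^{2^{jd}}_{u2,p2} equals 2^{jd(1/u2 − 1/u1)}. -/
open scoped ENNReal NNReal

noncomputable section

/-- `Q_{j,m} ⊆ Q = [0,1)^d` iff `0 ≤ m i < 2^j` for every coordinate `i`. -/
def inUnitCube (d j : ℕ) (m : Fin d → ℤ) : Prop :=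
  ∀ i, 0 ≤ m i ∧ m i < 2 ^ j

/-- For `ν ≤ j`: `Q_{j,m} ⊆ Q_{ν,k}`. -/
def cubeSub (d j ν : ℕ) (m k : Fin d → ℤ) : Prop :=
  ∀ i, k i * 2 ^ (j - ν) ≤ m i ∧ m i < (k i + 1) * 2 ^ (j - ν)

/-- The finite-dimensional Morrey quasi-norm `‖· | m^{2^{jd}}_{u,p}‖` (`ℝ≥0∞`-valued),
on coefficients indexed by the `m ∈ ℤ^d` with `Q_{j,m} ⊆ Q` (other coordinates are ignored). -/
def mNorm (d : ℕ) (u p : ℝ) (j : ℕ) (lam : (Fin d → ℤ) → ℂ) : ℝ≥0∞ :=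
  ⨆ νk : {νk : ℕ × (Fin d → ℤ) // νk.1 ≤ j ∧ inUnitCube d νk.1 νk.2},
    (2 : ℝ≥0∞) ^ ((d : ℝ) * ((j : ℝ) - (νk.1.1 : ℝ)) * (1 / u - 1 / p)) *
      (∑' m : {m : Fin d → ℤ // cubeSub d j νk.1.1 m νk.1.2},
        ((‖lam m.1‖₊ : ℝ≥0∞)) ^ p) ^ (1 / p)

/-- The `ℓ_q^{2^{jd}}` quasi-norm (`0 < q < ∞`) on level-`j` coefficients. -/
def lqNorm (d : ℕ) (q : ℝ) (j : ℕ) (lam : (Fin d → ℤ) → ℂ) : ℝ≥0∞ :=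
  (∑' m : {m : Fin d → ℤ // inUnitCube d j m}, ((‖lam m.1‖₊ : ℝ≥0∞)) ^ q) ^ (1 / q)

/-- The quasi-norm of the sequence space `ñ^σ_{u,p,q}(Q)`, `q ∈ (0,∞]`. -/
def nNorm (d : ℕ) (σ u p : ℝ) (q : ℝ≥0∞) (lam : ℕ → (Fin d → ℤ) → ℂ) : ℝ≥0∞ :=
  if q = ∞ then
    ⨆ j : ℕ, (2 : ℝ≥0∞) ^ ((j : ℝ) * (σ - d / u)) * mNorm d u p j (lam j)
  else
    (∑' j : ℕ, ((2 : ℝ≥0∞) ^ ((j : ℝ) * (σ - d / u)) * mNorm d u p j (lam j)) ^ q.toReal) ^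
      (1 / q.toReal)

/-- `k`-th entropy number of the identity map between two quasi-norms on one ambient group:
the infimum of all `ε > 0` such that the `N₁`-unit ball is covered by `2^(k-1)` `N₂`-balls of
radius `ε`. -/
def entropyNumber {Λ : Type*} [AddCommGroup Λ] (N₁ N₂ : Λ → ℝ≥0∞) (k : ℕ) : ℝ≥0∞ :=
  sInf {ε : ℝ≥0∞ | 0 < ε ∧ ∃ c : Fin (2 ^ (k - 1)) → Λ,
    ∀ x : Λ, N₁ x ≤ 1 → ∃ i, N₂ (x - c i) ≤ ε}

/-- Operator quasi-norm of the identity map between two quasi-norms on one ambient space: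
the smallest `C` with `N₂ x ≤ C · N₁ x` for all `x`. -/
def opNorm {Λ : Type*} (N₁ N₂ : Λ → ℝ≥0∞) : ℝ≥0∞ :=
  sInf {C : ℝ≥0∞ | ∀ x, N₂ x ≤ C * N₁ x}

end

noncomputable section MyAux

lemma pow_mean_le {ι : Type*} [Fintype ι] (b : ι → ℝ≥0∞) {θ : ℝ} (hθ : 0 < θ) (hθ1 : θ ≤ 1) :
    ∑ i, b i ^ θ ≤ (Fintype.card ι : ℝ≥0∞) ^ (1 - θ) * (∑ i, b i) ^ θ := by
  rcases isEmpty_or_nonempty ι with h | h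
  · simp
  set N : ℝ≥0∞ := (Fintype.card ι : ℝ≥0∞) with hN
  have hN0 : N ≠ 0 := by
    simp [hN, Fintype.card_ne_zero]
  have hNtop : N ≠ ⊤ := by simp [hN]
  have hw : ∑ _i : ι, N⁻¹ = 1 := by
    rw [Finset.sum_const, Finset.card_univ, nsmul_eq_mul]
    exact ENNReal.mul_inv_cancel hN0 hNtop
  have key := ENNReal.rpow_arith_mean_le_arith_mean_rpow Finset.univ
    (fun _ : ι => N⁻¹) (fun i => b i ^ θ) hw (p := 1/θ) (by
      rw [le_div_iff₀ hθ]; linarith)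
  have hsimp : ∀ i : ι, N⁻¹ * (b i ^ θ) ^ (1/θ) = N⁻¹ * b i := by
    intro i
    rw [← ENNReal.rpow_mul, mul_one_div_cancel hθ.ne', ENNReal.rpow_one]
  simp only [hsimp] at key
  rw [← Finset.mul_sum, ← Finset.mul_sum] at key
  have key2 := ENNReal.rpow_le_rpow key (le_of_lt hθ)
  rw [← ENNReal.rpow_mul, one_div_mul_cancel hθ.ne', ENNReal.rpow_one,
    ENNReal.mul_rpow_of_nonneg _ _ (le_of_lt hθ)] at key2
  calc ∑ i, b i ^ θ = N * (N⁻¹ * ∑ i, b i ^ θ) := by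
        rw [← mul_assoc, ENNReal.mul_inv_cancel hN0 hNtop, one_mul]
    _ ≤ N * (N⁻¹ ^ θ * (∑ i, b i) ^ θ) := by exact mul_le_mul_right key2 N
    _ = N ^ (1 - θ) * (∑ i, b i) ^ θ := by
        rw [← mul_assoc, ENNReal.inv_rpow, ← ENNReal.rpow_neg]
        congr 1
        have h1 : N ^ (1 - θ) = N ^ (1:ℝ) * N ^ (-θ) := by
          rw [← ENNReal.rpow_add _ _ hN0 hNtop]; ring_nf
        rw [h1, ENNReal.rpow_one]

lemma lp_embed {ι : Type*} [Fintype ι] (a : ι → ℝ≥0∞) {p1 p2 : ℝ} (hp2 : 0 < p2) (h : p2 ≤ p1) :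
    (∑ i, a i ^ p2) ^ (1/p2) ≤
      (Fintype.card ι : ℝ≥0∞) ^ (1/p2 - 1/p1) * (∑ i, a i ^ p1) ^ (1/p1) := by
  have hp1 : 0 < p1 := lt_of_lt_of_le hp2 h
  have hθ : 0 < p2 / p1 := div_pos hp2 hp1
  have hθ1 : p2 / p1 ≤ 1 := (div_le_one hp1).2 h
  have hb : ∀ i, a i ^ p2 = (a i ^ p1) ^ (p2 / p1) := by
    intro i; rw [← ENNReal.rpow_mul, mul_div_cancel₀ _ hp1.ne']
  have key := pow_mean_le (fun i => a i ^ p1) hθ hθ1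
  calc (∑ i, a i ^ p2) ^ (1/p2)
      = (∑ i, (a i ^ p1) ^ (p2/p1)) ^ (1/p2) := by simp_rw [hb]
    _ ≤ ((Fintype.card ι : ℝ≥0∞) ^ (1 - p2/p1) * (∑ i, a i ^ p1) ^ (p2/p1)) ^ (1/p2) :=
        ENNReal.rpow_le_rpow key (by positivity)
    _ = (Fintype.card ι : ℝ≥0∞) ^ (1/p2 - 1/p1) * (∑ i, a i ^ p1) ^ (1/p1) := by
        rw [ENNReal.mul_rpow_of_nonneg _ _ (by positivity), ← ENNReal.rpow_mul,
          ← ENNReal.rpow_mul]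
        have e1 : (1 - p2/p1) * (1/p2) = 1/p2 - 1/p1 := by
          field_simp
        have e2 : (p2/p1) * (1/p2) = 1/p1 := by
          rw [div_mul_div_comm, mul_one, div_eq_div_iff (by positivity) hp1.ne']
          ring
        rw [e1, e2]

/-- equiv of the cube-subtype with a Pi of finite intervals -/
def cubeEquiv (d j ν : ℕ) (k : Fin d → ℤ) :
    {m : Fin d → ℤ // cubeSub d j ν m k} ≃
      (∀ i : Fin d, (Finset.Ico (k i * 2 ^ (j - ν)) ((k i + 1) * 2 ^ (j - ν)) : Finset ℤ)) where
  toFun m i := ⟨m.1 i, Finset.mem_Ico.2 (m.2 i)⟩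
  invFun f := ⟨fun i => (f i).1, fun i => Finset.mem_Ico.1 (f i).2⟩
  left_inv _ := rfl
  right_inv _ := rfl

instance cubeFintype (d j ν : ℕ) (k : Fin d → ℤ) :
    Fintype {m : Fin d → ℤ // cubeSub d j ν m k} :=
  Fintype.ofEquiv _ (cubeEquiv d j ν k).symm

lemma cube_card (d j ν : ℕ) (k : Fin d → ℤ) :
    Fintype.card {m : Fin d → ℤ // cubeSub d j ν m k} = 2 ^ ((j - ν) * d) := by
  rw [Fintype.card_congr (cubeEquiv d j ν k), Fintype.card_pi]
  have : ∀ i : Fin d,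
      Fintype.card ((Finset.Ico (k i * 2 ^ (j - ν)) ((k i + 1) * 2 ^ (j - ν)) : Finset ℤ)) =
        2 ^ (j - ν) := by
    intro i
    rw [Fintype.card_coe, Int.card_Ico]
    have : (k i + 1) * 2 ^ (j - ν) - k i * 2 ^ (j - ν) = ((2 ^ (j - ν) : ℕ) : ℤ) := by
      push_cast; ring
    rw [this, Int.toNat_natCast]
  simp only [this, Finset.prod_const, Finset.card_univ, Fintype.card_fin, ← pow_mul]

lemma cube_card_ennreal {d j ν : ℕ} (hν : ν ≤ j) (k : Fin d → ℤ) :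
    (Fintype.card {m : Fin d → ℤ // cubeSub d j ν m k} : ℝ≥0∞) =
      (2 : ℝ≥0∞) ^ ((d : ℝ) * ((j : ℝ) - (ν : ℝ))) := by
  rw [cube_card]
  push_cast
  rw [← ENNReal.rpow_natCast]
  congr 1
  push_cast [Nat.cast_sub hν]
  ring

/-- membership of the subcube in the unit cube. -/
lemma cubeSub_unit {d j ν : ℕ} (hν : ν ≤ j) {k m : Fin d → ℤ}
    (hk : inUnitCube d ν k) (hm : cubeSub d j ν m k) : inUnitCube d j m := by
  intro i
  obtain ⟨hk0, hk1⟩ := hk i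
  obtain ⟨hm0, hm1⟩ := hm i
  constructor
  · exact le_trans (mul_nonneg hk0 (by positivity)) hm0
  · calc m i < (k i + 1) * 2 ^ (j - ν) := hm1
      _ ≤ 2 ^ ν * 2 ^ (j - ν) := by
          have : k i + 1 ≤ 2 ^ ν := hk1
          exact mul_le_mul_of_nonneg_right this (by positivity)
      _ = 2 ^ j := by rw [← pow_add, Nat.add_sub_cancel' hν]

open Classical in
/-- the extremal sequence: all coefficients in the unit cube equal to 1. -/
def lamOne (d j : ℕ) : (Fin d → ℤ) → ℂ := fun m => if inUnitCube d j m then 1 else 0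

lemma tsum_lamOne {d j ν : ℕ} (hν : ν ≤ j) {k : Fin d → ℤ} (hk : inUnitCube d ν k) (p : ℝ) :
    (∑' m : {m : Fin d → ℤ // cubeSub d j ν m k}, ((‖lamOne d j m.1‖₊ : ℝ≥0∞)) ^ p) =
      (Fintype.card {m : Fin d → ℤ // cubeSub d j ν m k} : ℝ≥0∞) := by
  rw [tsum_fintype]
  have : ∀ m : {m : Fin d → ℤ // cubeSub d j ν m k},
      ((‖lamOne d j m.1‖₊ : ℝ≥0∞)) ^ p = 1 := by
    intro m
    have : lamOne d j m.1 = 1 := by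
      simp [lamOne, cubeSub_unit hν hk m.2]
    simp [this]
  simp [this]

lemma mNorm_lamOne {d : ℕ} {u p : ℝ} (j : ℕ) (hp : 0 < p) (hpu : p ≤ u) :
    mNorm d u p j (lamOne d j) = (2 : ℝ≥0∞) ^ (((j : ℝ) * d) / u) := by
  have hu : 0 < u := lt_of_lt_of_le hp hpu
  have hterm : ∀ νk : {νk : ℕ × (Fin d → ℤ) // νk.1 ≤ j ∧ inUnitCube d νk.1 νk.2},
      (2 : ℝ≥0∞) ^ ((d : ℝ) * ((j : ℝ) - (νk.1.1 : ℝ)) * (1 / u - 1 / p)) *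
        (∑' m : {m : Fin d → ℤ // cubeSub d j νk.1.1 m νk.1.2},
          ((‖lamOne d j m.1‖₊ : ℝ≥0∞)) ^ p) ^ (1 / p) =
      (2 : ℝ≥0∞) ^ ((d : ℝ) * ((j : ℝ) - (νk.1.1 : ℝ)) / u) := by
    rintro ⟨⟨ν, k⟩, hν, hk⟩
    rw [tsum_lamOne hν hk, cube_card_ennreal hν, ← ENNReal.rpow_mul,
      ← ENNReal.rpow_add _ _ (by norm_num) (by norm_num)]
    congr 1
    field_simp
    ring
  simp only [mNorm, hterm]
  apply le_antisymm
  · apply iSup_le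
    rintro ⟨⟨ν, k⟩, hν, hk⟩
    apply ENNReal.rpow_le_rpow_of_exponent_le one_le_two
    have h1 : (ν : ℝ) ≥ 0 := Nat.cast_nonneg ν
    have h2 : (0:ℝ) ≤ d := Nat.cast_nonneg d
    have h3 : (0:ℝ) < u := hu
    have hνj : (ν : ℝ) ≤ (j : ℝ) := Nat.cast_le.2 hν
    rw [div_le_div_iff₀ h3 h3]
    have key : (d:ℝ) * ((j:ℝ) - ν) ≤ (j:ℝ) * d := by nlinarith [mul_nonneg h2 h1]
    nlinarith [mul_le_mul_of_nonneg_right key h3.le]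
  · have hidx : ((0 : ℕ), fun _ : Fin d => (0 : ℤ)) ∈
        {νk : ℕ × (Fin d → ℤ) | νk.1 ≤ j ∧ inUnitCube d νk.1 νk.2} := by
      constructor
      · exact Nat.zero_le j
      · intro i; simp [pow_zero]
    refine le_trans (le_of_eq ?_) (le_iSup _ (⟨_, hidx⟩ :
      {νk : ℕ × (Fin d → ℤ) // νk.1 ≤ j ∧ inUnitCube d νk.1 νk.2}))
    congr 1
    push_cast
    ring

end MyAux

theorem stmt7 (d : ℕ) (hd : 1 ≤ d) (u1 p1 u2 p2 : ℝ)
    (hp1 : 0 < p1) (hp1u1 : p1 ≤ u1) (hp2 : 0 < p2) (hp2u2 : p2 ≤ u2) (j : ℕ)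
    (h1 : p2 ≤ p1) (h2 : u2 < u1) :
    opNorm (mNorm d u1 p1 j) (mNorm d u2 p2 j) =
      (2 : ℝ≥0∞) ^ (((j : ℝ) * d) * (1 / u2 - 1 / u1)) := by
  have hu1 : 0 < u1 := lt_of_lt_of_le hp1 hp1u1
  have hu2 : 0 < u2 := lt_of_lt_of_le hp2 hp2u2
  have huu : 0 ≤ 1 / u2 - 1 / u1 := by
    rw [sub_nonneg]
    exact one_div_le_one_div_of_le hu2 (le_of_lt h2)
  set c : ℝ≥0∞ := (2 : ℝ≥0∞) ^ (((j : ℝ) * d) * (1 / u2 - 1 / u1)) with hc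
  -- upper bound : the constant c works
  have hmem : ∀ lam, mNorm d u2 p2 j lam ≤ c * mNorm d u1 p1 j lam := by
    intro lam
    apply iSup_le
    rintro ⟨⟨ν, k⟩, hν, hk⟩
    set a : {m : Fin d → ℤ // cubeSub d j ν m k} → ℝ≥0∞ := fun m => (‖lam m.1‖₊ : ℝ≥0∞)
    have hle := lp_embed a hp2 h1
    rw [cube_card_ennreal hν, ← ENNReal.rpow_mul] at hle
    calc (2 : ℝ≥0∞) ^ ((d : ℝ) * ((j : ℝ) - (ν : ℝ)) * (1 / u2 - 1 / p2)) *
          (∑' m : {m : Fin d → ℤ // cubeSub d j ν m k}, a m ^ p2) ^ (1 / p2)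
        ≤ (2 : ℝ≥0∞) ^ ((d : ℝ) * ((j : ℝ) - (ν : ℝ)) * (1 / u2 - 1 / p2)) *
          ((2 : ℝ≥0∞) ^ ((d : ℝ) * ((j : ℝ) - (ν : ℝ)) * (1 / p2 - 1 / p1)) *
            (∑' m : {m : Fin d → ℤ // cubeSub d j ν m k}, a m ^ p1) ^ (1 / p1)) := by
          apply mul_le_mul_right
          rw [tsum_fintype, tsum_fintype]
          exact hle
      _ = (2 : ℝ≥0∞) ^ ((d : ℝ) * ((j : ℝ) - (ν : ℝ)) * (1 / u2 - 1 / u1)) *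
          ((2 : ℝ≥0∞) ^ ((d : ℝ) * ((j : ℝ) - (ν : ℝ)) * (1 / u1 - 1 / p1)) *
            (∑' m : {m : Fin d → ℤ // cubeSub d j ν m k}, a m ^ p1) ^ (1 / p1)) := by
          rw [← mul_assoc, ← mul_assoc,
            ← ENNReal.rpow_add _ _ (by norm_num) (by norm_num),
            ← ENNReal.rpow_add _ _ (by norm_num) (by norm_num)]
          congr 2
          ring
      _ ≤ c * ((2 : ℝ≥0∞) ^ ((d : ℝ) * ((j : ℝ) - (ν : ℝ)) * (1 / u1 - 1 / p1)) *
            (∑' m : {m : Fin d → ℤ // cubeSub d j ν m k}, a m ^ p1) ^ (1 / p1)) := by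
          apply mul_le_mul_left
          apply ENNReal.rpow_le_rpow_of_exponent_le one_le_two
          have h1' : (ν : ℝ) ≥ 0 := Nat.cast_nonneg ν
          have h2' : (0:ℝ) ≤ d := Nat.cast_nonneg d
          have hνj : (ν : ℝ) ≤ (j : ℝ) := Nat.cast_le.2 hν
          have key : (d:ℝ) * ((j:ℝ) - ν) ≤ (j:ℝ) * d := by nlinarith [mul_nonneg h2' h1']
          nlinarith [mul_le_mul_of_nonneg_right key huu]
      _ ≤ c * mNorm d u1 p1 j lam := by
          apply mul_le_mul_right
          exact le_iSup (fun νk : {νk : ℕ × (Fin d → ℤ) // νk.1 ≤ j ∧ inUnitCube d νk.1 νk.2} =>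
            (2 : ℝ≥0∞) ^ ((d : ℝ) * ((j : ℝ) - (νk.1.1 : ℝ)) * (1 / u1 - 1 / p1)) *
              (∑' m : {m : Fin d → ℤ // cubeSub d j νk.1.1 m νk.1.2},
                ((‖lam m.1‖₊ : ℝ≥0∞)) ^ p1) ^ (1 / p1)) ⟨(ν, k), hν, hk⟩
  apply le_antisymm
  · exact sInf_le hmem
  · apply le_sInf
    intro C hC
    have h1' := hC (lamOne d j)
    rw [mNorm_lamOne j hp1 hp1u1, mNorm_lamOne j hp2 hp2u2] at h1'
    have hB0 : (2 : ℝ≥0∞) ^ (((j : ℝ) * d) / u1) ≠ 0 :=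
      (ENNReal.rpow_pos (by norm_num) (by norm_num)).ne'
    have hBtop : (2 : ℝ≥0∞) ^ (((j : ℝ) * d) / u1) ≠ ⊤ :=
      ENNReal.rpow_ne_top_of_nonneg (by positivity) (by norm_num)
    have hsplit : c = (2 : ℝ≥0∞) ^ (((j : ℝ) * d) / u2) *
        ((2 : ℝ≥0∞) ^ (((j : ℝ) * d) / u1))⁻¹ := by
      rw [← ENNReal.rpow_neg, ← ENNReal.rpow_add _ _ (by norm_num) (by norm_num), hc]
      congr 1
      ring
    rw [hsplit]
    calc (2 : ℝ≥0∞) ^ (((j : ℝ) * d) / u2) * ((2 : ℝ≥0∞) ^ (((j : ℝ) * d) / u1))⁻¹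
        ≤ (C * (2 : ℝ≥0∞) ^ (((j : ℝ) * d) / u1)) *
            ((2 : ℝ≥0∞) ^ (((j : ℝ) * d) / u1))⁻¹ := mul_le_mul_left h1' _
      _ = C := by
          rw [mul_assoc, ENNReal.mul_inv_cancel hB0 hBtop, mul_one]
end

section
/- Let d ≥ 1 be an integer, j ∈ ℕ₀ and 0 < p_i ≤ u_i < ∞ for i = 1, 2, with p1 < p2 and p1/u1 < p2/u2. Then for every λ ∈ ℂ^{2^{jd}}: ‖λ|m^{2^{jd}}_{u2,p2}‖ ≤ 2^{jd(1/u2 − p1/(p2·u1))} · (max_{m: Q_{j,m} ⊂ Q} |λ_{j,m}|)^{1 − p1/p2} · ‖λ|m^{2^{jd}}_{u1,p1}‖^{p1/p2}. -/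
open scoped ENNReal NNReal

/-!
Within a single block `Q_{ν,k}`, every coefficient is bounded by `M = max |λ_{j,m}|`, so
`|λ_{j,m}|^{p₂} ≤ M^{p₂-p₁} |λ_{j,m}|^{p₁}`; summing, the `ℓ_{p₂}` norm of the block is at most
`M^{1-p₁/p₂}` times the `p₁/p₂`-th power of its `ℓ_{p₁}` norm. The Morrey weights then compare as
`2^{d(j-ν)(1/u₂-1/p₂)} = 2^{d(j-ν)(1/u₂-p₁/(p₂u₁))} (2^{d(j-ν)(1/u₁-1/p₁)})^{p₁/p₂}`, and the first
factor is largest at `ν = 0` because `p₁/u₁ ≤ p₂/u₂`.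
-/

namespace ENNReal

theorem rpow_le_mul_rpow_of_le {a M : ℝ≥0∞} {p q : ℝ} (hp : 0 ≤ p) (hpq : p ≤ q) (ha : a ≤ M) :
    a ^ q ≤ M ^ (q - p) * a ^ p := by
  have hqp : 0 ≤ q - p := sub_nonneg.2 hpq
  calc a ^ q = a ^ (q - p) * a ^ p := by rw [← rpow_add_of_nonneg _ _ hqp hp, sub_add_cancel]
    _ ≤ M ^ (q - p) * a ^ p := by gcongr

theorem tsum_rpow_one_div_le_of_le {ι : Type*} {f : ι → ℝ≥0∞} {M : ℝ≥0∞} {p q : ℝ}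
    (hp : 0 < p) (hpq : p ≤ q) (hf : ∀ i, f i ≤ M) :
    (∑' i, f i ^ q) ^ (1 / q) ≤ M ^ (1 - p / q) * ((∑' i, f i ^ p) ^ (1 / p)) ^ (p / q) := by
  have hq : 0 < q := hp.trans_le hpq
  calc (∑' i, f i ^ q) ^ (1 / q) ≤ (M ^ (q - p) * ∑' i, f i ^ p) ^ (1 / q) := by
        rw [← ENNReal.tsum_mul_left]
        gcongr with i
        exact rpow_le_mul_rpow_of_le hp.le hpq (hf i)
    _ = M ^ (1 - p / q) * ((∑' i, f i ^ p) ^ (1 / p)) ^ (p / q) := by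
        rw [mul_rpow_of_nonneg _ _ (by positivity), ← rpow_mul, ← rpow_mul]
        congr 2 <;> field_simp

end ENNReal

theorem morrey_exponent_le {u₁ p₁ u₂ p₂ D J : ℝ} (hp₁ : 0 < p₁) (hp₂ : 0 < p₂)
    (hpu : p₁ / u₁ ≤ p₂ / u₂) (hDJ : D ≤ J) :
    D * (1 / u₂ - 1 / p₂) ≤
      J * (1 / u₂ - p₁ / (p₂ * u₁)) + D * (1 / u₁ - 1 / p₁) * (p₁ / p₂) := by
  have hc : 0 ≤ 1 / u₂ - p₁ / (p₂ * u₁) := by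
    have : p₁ / (p₂ * u₁) ≤ 1 / u₂ := by
      calc p₁ / (p₂ * u₁) = p₁ / u₁ / p₂ := by rw [mul_comm, div_div]
        _ ≤ p₂ / u₂ / p₂ := by gcongr
        _ = 1 / u₂ := by field_simp
    linarith
  have hsplit : D * (1 / u₂ - 1 / p₂) =
      D * (1 / u₂ - p₁ / (p₂ * u₁)) + D * (1 / u₁ - 1 / p₁) * (p₁ / p₂) := by
    field_simp
    ring
  rw [hsplit]
  gcongr

theorem inUnitCube_of_cubeSub {d j ν : ℕ} {m k : Fin d → ℤ} (hν : ν ≤ j)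
    (hk : inUnitCube d ν k) (hm : cubeSub d j ν m k) : inUnitCube d j m := by
  intro i
  obtain ⟨hkm, hmk⟩ := hm i
  obtain ⟨hk₀, hk₁⟩ := hk i
  refine ⟨(mul_nonneg hk₀ (by positivity)).trans hkm, hmk.trans_le ?_⟩
  calc (k i + 1) * 2 ^ (j - ν) ≤ 2 ^ ν * 2 ^ (j - ν) := by gcongr; omega
    _ = 2 ^ j := by rw [← pow_add, Nat.add_sub_cancel' hν]

theorem two_rpow_morrey_weight_le {u₁ p₁ u₂ p₂ : ℝ} (hp₁ : 0 < p₁) (hp₂ : 0 < p₂)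
    (hpu : p₁ / u₁ ≤ p₂ / u₂) (d j ν : ℕ) :
    (2 : ℝ≥0∞) ^ ((d : ℝ) * ((j : ℝ) - ν) * (1 / u₂ - 1 / p₂)) ≤
      2 ^ (((j : ℝ) * d) * (1 / u₂ - p₁ / (p₂ * u₁))) *
        (2 ^ ((d : ℝ) * ((j : ℝ) - ν) * (1 / u₁ - 1 / p₁))) ^ (p₁ / p₂) := by
  rw [← ENNReal.rpow_mul, ← ENNReal.rpow_add _ _ two_ne_zero ENNReal.ofNat_ne_top]
  refine ENNReal.rpow_le_rpow_of_exponent_le one_le_two (morrey_exponent_le hp₁ hp₂ hpu ?_)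
  have : (0 : ℝ) ≤ d * ν := by positivity
  linarith

theorem stmt14_general (d : ℕ) (j : ℕ) (u1 p1 u2 p2 : ℝ)
    (hp1 : 0 < p1) (hp2 : 0 < p2)
    (h1 : p1 < p2) (h2 : p1 / u1 < p2 / u2) (lam : (Fin d → ℤ) → ℂ) :
    mNorm d u2 p2 j lam ≤
      (2 : ℝ≥0∞) ^ (((j : ℝ) * d) * (1 / u2 - p1 / (p2 * u1))) *
        (⨆ m : {m : Fin d → ℤ // inUnitCube d j m}, (‖lam m.1‖₊ : ℝ≥0∞)) ^ (1 - p1 / p2) *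
        (mNorm d u1 p1 j lam) ^ (p1 / p2) := by
  refine iSup_le ?_
  rintro ⟨⟨ν, k⟩, hν, hk⟩
  set B₁ := (∑' m : {m // cubeSub d j ν m k}, (‖lam m.1‖₊ : ℝ≥0∞) ^ p1) ^ (1 / p1)
  have hblock := ENNReal.tsum_rpow_one_div_le_of_le hp1 h1.le
    (f := fun m : {m // cubeSub d j ν m k} => (‖lam m.1‖₊ : ℝ≥0∞)) fun m =>
      le_iSup (fun m : {m // inUnitCube d j m} => (‖lam m.1‖₊ : ℝ≥0∞))
        ⟨m.1, inUnitCube_of_cubeSub hν hk m.2⟩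
  have hweight := two_rpow_morrey_weight_le hp1 hp2 h2.le d j ν
  have hnorm : 2 ^ ((d : ℝ) * ((j : ℝ) - ν) * (1 / u1 - 1 / p1)) * B₁ ≤ mNorm d u1 p1 j lam :=
    le_iSup_of_le (⟨⟨ν, k⟩, hν, hk⟩ : {νk : ℕ × (Fin d → ℤ) // νk.1 ≤ j ∧ inUnitCube d νk.1 νk.2})
      le_rfl
  grw [hweight, hblock, mul_mul_mul_comm, ← ENNReal.mul_rpow_of_nonneg _ _ (by positivity), hnorm]

theorem stmt14 (d : ℕ) (hd : 1 ≤ d) (j : ℕ) (u1 p1 u2 p2 : ℝ)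
    (hp1 : 0 < p1) (hp1u1 : p1 ≤ u1) (hp2 : 0 < p2) (hp2u2 : p2 ≤ u2)
    (h1 : p1 < p2) (h2 : p1 / u1 < p2 / u2) (lam : (Fin d → ℤ) → ℂ) :
    mNorm d u2 p2 j lam ≤
      (2 : ℝ≥0∞) ^ (((j : ℝ) * d) * (1 / u2 - p1 / (p2 * u1))) *
        (⨆ m : {m : Fin d → ℤ // inUnitCube d j m}, (‖lam m.1‖₊ : ℝ≥0∞)) ^ (1 - p1 / p2) *
        (mNorm d u1 p1 j lam) ^ (p1 / p2) :=
  stmt14_general d j u1 p1 u2 p2 hp1 hp2 h1 h2 lam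
end
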